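/- Let a ∈ ℂ \ {0}, f ≠ 0 arbitrary, d = 1 + 2a, g = -1 + i·a·√3 (or g = -1 - i·a·√3). With A, B, D defined as A = [[a, a-2, a-2], [-2a+1, d, -2a+1], [f, f, g]], B = [[a-2, -a+2, -a+2], [2a-1, -2a+1, 2a-1], [-f, -f, f]], D = [[-a+3, 3a-3, -a-1], [-a+2, 3a-2, -3a], [3, 2a-1, -2a-1]], assume a ∉ {-1, 0, 2, 1/2}, and let C be the unique matrix satisfying A²B - BCB - ABD + BD² = 0. Then the determinant of the block matrix S = [[A,B],[C,D]] equals 32(1 ± i√3)·a⁶; in particular S is invertible. -/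

import Mathlib

/-!
Because `B` is invertible, a block column operation gives
`det S = (-1)ⁿ det B · det (C - D B⁻¹ A)`, and the quadratic equation defining `C` says
precisely that `B (C - D B⁻¹ A) B = K B⁻¹ K` with `K = A B - B D`. Hence
`det S · (det B)² = (-1)ⁿ (det K)²`. For the given `3 × 3` matrices
`det K = 4 a² (g + 1 - a) det B`, so `det S = -16 a⁴ (g + 1 - a)²`, and `g + 1 - a = a (t - 1)`
with `t = ±i√3` gives `det S = 32 (1 + t) a⁶`, nonzero as `t ≠ -1`.
-/

open Matrix Complex

namespace Matrix

variable {n R : Type*} [Fintype n] [DecidableEq n] [CommRing R]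

theorem det_fromBlocks_zero_neg_one_one_zero :
    (fromBlocks 0 (-1) 1 0 : Matrix (n ⊕ n) (n ⊕ n) R).det = 1 := by
  have hfac : (fromBlocks 0 (-1) 1 0 : Matrix (n ⊕ n) (n ⊕ n) R) =
      fromBlocks 1 (-1) 0 1 * fromBlocks 1 0 1 1 * fromBlocks 1 (-1) 0 1 := by
    simp [fromBlocks_multiply]
  simp [hfac]

theorem det_fromBlocks₁₂ (A B C D : Matrix n n R) (hB : IsUnit B.det) :
    (fromBlocks A B C D).det = (-1) ^ Fintype.card n * B.det * (C - D * B⁻¹ * A).det := by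
  let := invertibleOfIsUnitDet B hB
  have hrot : fromBlocks A B C D * fromBlocks 0 (-1) 1 0 = fromBlocks B (-A) D (-C) := by
    simp [fromBlocks_multiply]
  calc (fromBlocks A B C D).det
      = (fromBlocks A B C D * fromBlocks 0 (-1) 1 0).det := by
        rw [det_mul, det_fromBlocks_zero_neg_one_one_zero, mul_one]
    _ = B.det * (-C - D * ⅟B * -A).det := by rw [hrot, det_fromBlocks₁₁]
    _ = (-1) ^ Fintype.card n * B.det * (C - D * B⁻¹ * A).det := by
        rw [invOf_eq_nonsing_inv, show -C - D * B⁻¹ * -A = -(C - D * B⁻¹ * A) by noncomm_ring,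
          det_neg]
        ring

theorem det_fromBlocks_mul_det_sq_of_quadratic (A B C D : Matrix n n R) (hB : IsUnit B.det)
    (hC : A ^ 2 * B - B * C * B - A * B * D + B * D ^ 2 = 0) :
    (fromBlocks A B C D).det * B.det ^ 2 = (-1) ^ Fintype.card n * (A * B - B * D).det ^ 2 := by
  have hschur : B * (C - D * B⁻¹ * A) * B = (A * B - B * D) * B⁻¹ * (A * B - B * D) := by
    have hBCB : B * C * B = A ^ 2 * B - A * B * D + B * D ^ 2 := by
      rw [eq_comm, ← sub_eq_zero, ← hC]; abel
    simp only [Matrix.mul_sub, Matrix.sub_mul, Matrix.mul_assoc,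
      mul_nonsing_inv_cancel_left _ _ hB, nonsing_inv_mul_cancel_left _ _ hB]
    rw [← Matrix.mul_assoc B C B, hBCB]
    noncomm_ring
  have hdet := congrArg det hschur
  simp only [det_mul] at hdet
  rw [det_fromBlocks₁₂ A B C D hB]
  linear_combination (-1) ^ Fintype.card n * B.det * hdet
    + (-1) ^ Fintype.card n * (A * B - B * D).det ^ 2 * det_nonsing_inv_mul_det B hB

theorem quadratic_of_eq_inv_mul_mul_inv (A B D : Matrix n n R) (hB : IsUnit B.det) :
    A ^ 2 * B - B * (B⁻¹ * (A ^ 2 * B - A * B * D + B * D ^ 2) * B⁻¹) * B - A * B * D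
      + B * D ^ 2 = 0 := by
  rw [Matrix.mul_assoc B, nonsing_inv_mul_cancel_right _ _ hB,
    mul_nonsing_inv_cancel_left _ _ hB]
  abel

end Matrix

section Example

variable {R : Type*} [CommRing R]

def exampleA (a f g : R) : Matrix (Fin 3) (Fin 3) R :=
  !![a, a - 2, a - 2; -2 * a + 1, 1 + 2 * a, -2 * a + 1; f, f, g]

def exampleB (a f : R) : Matrix (Fin 3) (Fin 3) R :=
  !![a - 2, -a + 2, -a + 2; 2 * a - 1, -2 * a + 1, 2 * a - 1; -f, -f, f]

def exampleD (a : R) : Matrix (Fin 3) (Fin 3) R :=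
  !![-a + 3, 3 * a - 3, -a - 1; -a + 2, 3 * a - 2, -3 * a; 3, 2 * a - 1, -2 * a - 1]

theorem det_exampleB (a f : R) : (exampleB a f).det = 4 * f * ((a - 2) * (2 * a - 1)) := by
  rw [exampleB, det_fin_three]
  simp only [of_apply, cons_val', cons_val_zero, cons_val_one, cons_val, cons_val_fin_one]
  ring

theorem det_exampleA_mul_exampleB_sub (a f g : R) :
    (exampleA a f g * exampleB a f - exampleB a f * exampleD a).det
      = 4 * a ^ 2 * (g + 1 - a) * (exampleB a f).det := by
  rw [det_exampleB, exampleA, exampleB, exampleD, det_fin_three]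
  simp only [Matrix.sub_apply, mul_apply, Fin.sum_univ_three, of_apply, cons_val', cons_val_zero,
    cons_val_one, cons_val, cons_val_fin_one]
  ring

theorem det_fromBlocks_example {a f g : R} {C : Matrix (Fin 3) (Fin 3) R}
    (hB : IsUnit (exampleB a f).det)
    (hC : exampleA a f g ^ 2 * exampleB a f - exampleB a f * C * exampleB a f
      - exampleA a f g * exampleB a f * exampleD a + exampleB a f * exampleD a ^ 2 = 0) :
    (fromBlocks (exampleA a f g) (exampleB a f) C (exampleD a)).det
      = -(4 * a ^ 2 * (g + 1 - a)) ^ 2 := by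
  apply (hB.pow 2).mul_left_inj.mp
  rw [det_fromBlocks_mul_det_sq_of_quadratic _ _ _ _ hB hC, det_exampleA_mul_exampleB_sub,
    Fintype.card_fin]
  ring

theorem det_fromBlocks_example_of_sq_eq_neg_three {a f t : R} {C : Matrix (Fin 3) (Fin 3) R}
    (hB : IsUnit (exampleB a f).det)
    (hC : exampleA a f (-1 + a * t) ^ 2 * exampleB a f - exampleB a f * C * exampleB a f
      - exampleA a f (-1 + a * t) * exampleB a f * exampleD a
      + exampleB a f * exampleD a ^ 2 = 0)
    (ht : t ^ 2 = -3) :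
    (fromBlocks (exampleA a f (-1 + a * t)) (exampleB a f) C (exampleD a)).det
      = 32 * (1 + t) * a ^ 6 := by
  rw [det_fromBlocks_example hB hC]
  linear_combination (-16 * a ^ 6) * ht

theorem isUnit_det_exampleB {K : Type*} [Field K] [CharZero K] {a f : K} (ha2 : a ≠ 2)
    (ha : a ≠ 1 / 2) (hf : f ≠ 0) :
    IsUnit (exampleB a f).det := by
  rw [det_exampleB, isUnit_iff_ne_zero]
  have h2a : 2 * a - 1 ≠ 0 := fun h => ha (by linear_combination h / 2)
  exact mul_ne_zero (mul_ne_zero (by norm_num) hf) (mul_ne_zero (sub_ne_zero.mpr ha2) h2a)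

end Example

theorem one_add_ne_zero_of_sq_eq_neg_three {R : Type*} [Ring R] [CharZero R] {t : R}
    (ht : t ^ 2 = -3) : 1 + t ≠ 0 := fun h => by
  rw [eq_neg_of_add_eq_zero_right h] at ht
  norm_num at ht

theorem stmt_7 (a f : ℂ) (ha : a ≠ -1 ∧ a ≠ 0 ∧ a ≠ 2 ∧ a ≠ 1 / 2) (hf : f ≠ 0)
    (d g : ℂ) (hd : d = 1 + 2 * a)
    (hg : g = -1 + I * a * (Real.sqrt 3 : ℂ) ∨ g = -1 - I * a * (Real.sqrt 3 : ℂ))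
    (A B D C : Matrix (Fin 3) (Fin 3) ℂ)
    (hA : A = !![a, a - 2, a - 2; -2 * a + 1, d, -2 * a + 1; f, f, g])
    (hB : B = !![a - 2, -a + 2, -a + 2; 2 * a - 1, -2 * a + 1, 2 * a - 1; -f, -f, f])
    (hD : D = !![-a + 3, 3 * a - 3, -a - 1; -a + 2, 3 * a - 2, -3 * a; 3, 2 * a - 1, -2 * a - 1])
    (hC : C = B⁻¹ * (A ^ 2 * B - A * B * D + B * D ^ 2) * B⁻¹) :
    ((fromBlocks A B C D).det = 32 * (1 + I * (Real.sqrt 3 : ℂ)) * a ^ 6 ∨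
      (fromBlocks A B C D).det = 32 * (1 - I * (Real.sqrt 3 : ℂ)) * a ^ 6) ∧
    IsUnit (fromBlocks A B C D) := by
  obtain ⟨-, ha0, ha2, hah⟩ := ha
  have hA : A = exampleA a f g := by rw [hA, hd]; rfl
  have hB : B = exampleB a f := hB
  have hD : D = exampleD a := hD
  have hBunit : IsUnit B.det := hB ▸ isUnit_det_exampleB ha2 hah hf
  have hquad : A ^ 2 * B - B * C * B - A * B * D + B * D ^ 2 = 0 := by
    rw [hC]; exact quadratic_of_eq_inv_mul_mul_inv A B D hBunit
  have hval : ∀ t : ℂ, t ^ 2 = -3 → g = -1 + a * t →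
      (fromBlocks A B C D).det = 32 * (1 + t) * a ^ 6 ∧ IsUnit (fromBlocks A B C D) := by
    rintro t ht rfl
    rw [hA, hB, hD] at hquad ⊢
    have hS := det_fromBlocks_example_of_sq_eq_neg_three (hB ▸ hBunit) hquad ht
    refine ⟨hS, (isUnit_iff_isUnit_det _).mpr (isUnit_iff_ne_zero.mpr ?_)⟩
    rw [hS]
    exact mul_ne_zero (mul_ne_zero (by norm_num) (one_add_ne_zero_of_sq_eq_neg_three ht))
      (pow_ne_zero 6 ha0)
  have hsqrt : (I * (Real.sqrt 3 : ℂ)) ^ 2 = -3 := by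
    rw [mul_pow, I_sq, ← ofReal_pow, Real.sq_sqrt (by norm_num)]; push_cast; ring
  rcases hg with hg | hg
  · obtain ⟨hS, hunit⟩ := hval (I * Real.sqrt 3) hsqrt (by rw [hg]; ring)
    exact ⟨Or.inl hS, hunit⟩
  · obtain ⟨hS, hunit⟩ := hval (-(I * Real.sqrt 3)) (by rw [neg_sq, hsqrt]) (by rw [hg]; ring)
    exact ⟨Or.inr (by rw [hS]; ring), hunit⟩
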